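/- A ring R is cap-free if and only if R is a hyperhole. More precisely, if R is a k-ring with good partition (X_1,…,X_k), then R contains no induced cap if and only if for all i, X_i is complete to X_{i+1} (indices modulo k). -/

import Mathlib

/-!
Once consecutive parts are complete to each other, two vertices are adjacent exactly when they are
distinct and their parts are at most one apart, so the vertices of one part are true twins. Let `x`
see exactly the hole edge `ab`. If `x` and `a` shared a part, the other hole neighbour of `a` would
see `x`; likewise for `b`. So `a` and `b` lie in the parts next to that of `x` and, being adjacent
with `k ≥ 4`, in the same one; but then they are twins, which the other hole neighbour of `a` is not.

Conversely, if `x ∈ X i` misses `y ∈ X (i + 1)`, choose in each part `X j` a vertex `u j` whose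
closed neighbourhood is `X (j - 1) ∪ X j ∪ X (j + 1)`. Replacing `u (i + 1)` by `y` gives a hole of
length `k`, and `x` sees exactly its vertices in `X (i - 1)` and `X i`.
-/

open SimpleGraph Set

variable {V : Type*}

/-- closed neighborhood -/
def closedNbhd (G : SimpleGraph V) (v : V) : Set V := insert v (G.neighborSet v)

def IsRingPartition (G : SimpleGraph V) (k : ℕ) (X : ZMod k → Set V) : Prop :=
  4 ≤ k ∧ (∀ i, (X i).Nonempty) ∧ (Pairwise fun i j => Disjoint (X i) (X j)) ∧
    (⋃ i, X i) = Set.univ ∧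
    ∀ i : ZMod k, ∃ (n : ℕ) (u : Fin (n + 1) → V),
      Function.Injective u ∧ Set.range u = X i ∧
      (∀ a b : Fin (n + 1), a ≤ b → closedNbhd G (u b) ⊆ closedNbhd G (u a)) ∧
      X i ⊆ closedNbhd G (u (Fin.last n)) ∧
      closedNbhd G (u 0) = X (i - 1) ∪ X i ∪ X (i + 1)

def HasCap (G : SimpleGraph V) : Prop :=
  ∃ n, 4 ≤ n ∧ ∃ f : cycleGraph n ↪g G, ∃ x, x ∉ Set.range ⇑f ∧
    ∃ j j' : Fin n, (cycleGraph n).Adj j j' ∧ ∀ i : Fin n, G.Adj x (f i) ↔ (i = j ∨ i = j')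

lemma update_mem_of_forall_mem {ι α : Type*} [DecidableEq ι] {X : ι → Set α} {u : ι → α}
    (hu : ∀ j, u j ∈ X j) {i : ι} {y : α} (hy : y ∈ X i) (j : ι) :
    Function.update u i y j ∈ X j :=
  (Set.update_mem_pi_iff_of_mem (s := univ) fun j _ => hu j).2 (fun _ => hy) j trivial

lemma ZMod.one_two_three_ne_zero {k : ℕ} (hk : 4 ≤ k) :
    (1 : ZMod k) ≠ 0 ∧ (2 : ZMod k) ≠ 0 ∧ (3 : ZMod k) ≠ 0 := by
  have h : ∀ c : ℕ, 0 < c → c < k → (c : ZMod k) ≠ 0 := fun c h0 hc hc0 =>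
    absurd (Nat.le_of_dvd h0 ((ZMod.natCast_eq_zero_iff c k).mp hc0)) (by omega)
  exact ⟨mod_cast h 1 (by omega) (by omega), mod_cast h 2 (by omega) (by omega),
    mod_cast h 3 (by omega) (by omega)⟩

lemma ZMod.eq_of_near_of_sides {k : ℕ} (hk : 4 ≤ k) {i l l' : ZMod k}
    (hl : l = i - 1 ∨ l = i + 1) (hl' : l' = i - 1 ∨ l' = i + 1)
    (hll' : l' = l - 1 ∨ l' = l ∨ l' = l + 1) : l = l' := by
  obtain ⟨h1, h2, h3⟩ := ZMod.one_two_three_ne_zero hk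
  rcases hl with rfl | rfl <;> rcases hl' with rfl | rfl
  · rfl
  · rcases hll' with h | h | h
    exacts [(h3 (by linear_combination h)).elim, (h2 (by linear_combination h)).elim,
      (h1 (by linear_combination h)).elim]
  · rcases hll' with h | h | h
    exacts [(h1 (by linear_combination -h)).elim, (h2 (by linear_combination -h)).elim,
      (h3 (by linear_combination -h)).elim]
  · rfl

lemma cycleGraph_adj_iff_finEquiv {m : ℕ} {u v : Fin (m + 2)} :
    (cycleGraph (m + 2)).Adj u v ↔
      ZMod.finEquiv _ u - ZMod.finEquiv _ v = 1 ∨ ZMod.finEquiv _ v - ZMod.finEquiv _ u = 1 := by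
  simp only [cycleGraph_adj, ← map_sub, ← map_one (ZMod.finEquiv (m + 2)),
    (ZMod.finEquiv (m + 2)).injective.eq_iff]

theorem hasCap_iff_exists_zmod {G : SimpleGraph V} :
    HasCap G ↔ ∃ n, 4 ≤ n ∧ ∃ w : ZMod n → V, Function.Injective w ∧
      (∀ a b, G.Adj (w a) (w b) ↔ a - b = 1 ∨ b - a = 1) ∧
      ∃ x ∉ Set.range w, ∃ j, ∀ a, G.Adj x (w a) ↔ a = j ∨ a = j + 1 := by
  constructor
  · rintro ⟨n, hn, f, x, hx, j, j', hjj', hxf⟩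
    obtain ⟨m, rfl⟩ : ∃ m, n = m + 2 := ⟨n - 2, by omega⟩
    set e := ZMod.finEquiv (m + 2)
    have hadj : ∀ a b, G.Adj (f (e.symm a)) (f (e.symm b)) ↔ a - b = 1 ∨ b - a = 1 := by
      simp [cycleGraph_adj_iff_finEquiv, e]
    have hxw : ∀ a, G.Adj x (f (e.symm a)) ↔ a = e j ∨ a = e j' := by
      simp [hxf, e.symm_apply_eq]
    refine ⟨m + 2, hn, f ∘ e.symm, f.injective.comp e.symm.injective, hadj, x,
      fun ⟨a, ha⟩ => hx ⟨e.symm a, ha⟩, ?_⟩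
    rw [cycleGraph_adj_iff_finEquiv] at hjj'
    rcases hjj' with h | h
    · exact ⟨e j', fun a => by rw [Function.comp_apply, hxw, sub_eq_iff_eq_add'.mp h, or_comm]⟩
    · exact ⟨e j, fun a => by rw [Function.comp_apply, hxw, sub_eq_iff_eq_add'.mp h]⟩
  · rintro ⟨n, hn, w, hw, hadj, x, hx, j, hxw⟩
    obtain ⟨m, rfl⟩ : ∃ m, n = m + 2 := ⟨n - 2, by omega⟩
    set e := ZMod.finEquiv (m + 2)
    have hcyc : ∀ {u v}, G.Adj (w (e u)) (w (e v)) ↔ (cycleGraph (m + 2)).Adj u v := by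
      simp [cycleGraph_adj_iff_finEquiv, hadj, e]
    refine ⟨m + 2, hn, ⟨⟨w ∘ e, hw.comp e.injective⟩, hcyc⟩, x, fun ⟨a, ha⟩ => hx ⟨e a, ha⟩,
      e.symm j, e.symm (j + 1), ?_, fun a => ?_⟩
    · simp [cycleGraph_adj_iff_finEquiv, e]
    · simp [hxw, e, ← e.symm.injective.eq_iff]

namespace IsRingPartition

variable {G : SimpleGraph V} {k : ℕ} {X : ZMod k → Set V}

lemma exists_mem (h : IsRingPartition G k X) (v : V) : ∃ i, v ∈ X i :=
  Set.mem_iUnion.mp (h.2.2.2.1 ▸ Set.mem_univ v)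

lemma eq_of_mem (h : IsRingPartition G k X) {v : V} {i j : ZMod k} (hi : v ∈ X i)
    (hj : v ∈ X j) : i = j :=
  by_contra fun hij => Set.disjoint_left.mp (h.2.2.1 hij) hi hj

lemma ne_of_mem (h : IsRingPartition G k X) {v w : V} {i j : ZMod k} (hv : v ∈ X i)
    (hw : w ∈ X j) (hij : i ≠ j) : v ≠ w := by
  rintro rfl
  exact hij (h.eq_of_mem hv hw)

lemma near_of_adj (h : IsRingPartition G k X) {v w : V} {i j : ZMod k} (hv : v ∈ X i)
    (hw : w ∈ X j) (hvw : G.Adj v w) : j = i - 1 ∨ j = i ∨ j = i + 1 := by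
  obtain ⟨n, u, -, hu, hmono, -, hu0⟩ := h.2.2.2.2 i
  obtain ⟨t, rfl⟩ := hu ▸ hv
  have : w ∈ X (i - 1) ∪ X i ∪ X (i + 1) :=
    hu0 ▸ hmono 0 t (Fin.zero_le t) (Set.mem_insert_of_mem _ hvw)
  rcases this with (hw' | hw') | hw'
  exacts [Or.inl (h.eq_of_mem hw hw'), Or.inr (Or.inl (h.eq_of_mem hw hw')),
    Or.inr (Or.inr (h.eq_of_mem hw hw'))]

lemma adj_of_mem_of_mem (h : IsRingPartition G k X) {v w : V} {i : ZMod k} (hv : v ∈ X i)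
    (hw : w ∈ X i) (hvw : v ≠ w) : G.Adj v w := by
  obtain ⟨n, u, -, hu, hmono, hlast, -⟩ := h.2.2.2.2 i
  obtain ⟨t, rfl⟩ := hu ▸ hw
  rcases hmono t (Fin.last n) (Fin.le_last t) (hlast hv) with rfl | hadj
  exacts [absurd rfl hvw, hadj.symm]

lemma exists_dominating (h : IsRingPartition G k X) (i : ZMod k) :
    ∃ u ∈ X i, ∀ v ∈ X (i - 1) ∪ X i ∪ X (i + 1), v ≠ u → G.Adj u v := by
  obtain ⟨n, u, -, hu, -, -, hu0⟩ := h.2.2.2.2 i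
  refine ⟨u 0, hu ▸ Set.mem_range_self 0, fun v hv hvu => ?_⟩
  rw [← hu0] at hv
  exact hv.resolve_left hvu

lemma adj_iff_of_adj_add_one (h : IsRingPartition G k X) {w : ZMod k → V}
    (hw : ∀ j, w j ∈ X j) (hsucc : ∀ a, G.Adj (w a) (w (a + 1))) (a b : ZMod k) :
    G.Adj (w a) (w b) ↔ a - b = 1 ∨ b - a = 1 := by
  refine ⟨fun hab => ?_, ?_⟩
  · rcases h.near_of_adj (hw a) (hw b) hab with rfl | rfl | rfl
    exacts [Or.inl (by ring), absurd hab G.irrefl, Or.inr (by ring)]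
  · rintro (hab | hab) <;> rw [sub_eq_iff_eq_add'.mp hab]
    exacts [(hsucc b).symm, hsucc a]

lemma adj_update_add_one (h : IsRingPartition G k X) {u : ZMod k → V} (hu : ∀ j, u j ∈ X j)
    (hdom : ∀ j, ∀ v ∈ X (j - 1) ∪ X j ∪ X (j + 1), v ≠ u j → G.Adj (u j) v)
    {i : ZMod k} {y : V} (hy : y ∈ X i) (a : ZMod k) :
    G.Adj (Function.update u i y a) (Function.update u i y (a + 1)) := by
  have hmem : ∀ j, Function.update u i y j ∈ X j := update_mem_of_forall_mem hu hy
  have n1 := (ZMod.one_two_three_ne_zero h.1).1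
  have hne : Function.update u i y a ≠ Function.update u i y (a + 1) :=
    h.ne_of_mem (hmem a) (hmem _) fun e => n1 (by linear_combination -e)
  by_cases ha : a + 1 = i
  · rw [Function.update_of_ne (fun e => n1 (by linear_combination ha - e))] at hne ⊢
    exact hdom a _ (Or.inr (hmem _)) hne.symm
  · rw [Function.update_of_ne ha] at hne ⊢
    refine (hdom (a + 1) _ (Or.inl (Or.inl ?_)) hne).symm
    rw [add_sub_cancel_right]
    exact hmem a

lemma hasCap_of_not_adj (h : IsRingPartition G k X) {x y : V} {i : ZMod k} (hx : x ∈ X i)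
    (hy : y ∈ X (i + 1)) (hxy : ¬ G.Adj x y) : HasCap G := by
  obtain ⟨n1, n2, -⟩ := ZMod.one_two_three_ne_zero h.1
  choose u hu hdom using h.exists_dominating
  set w := Function.update u (i + 1) y
  have hwX : ∀ j, w j ∈ X j := update_mem_of_forall_mem hu hy
  have hwi : w i = u i := Function.update_of_ne (fun e => n1 (by linear_combination -e)) _ _
  have hwi' : w (i - 1) = u (i - 1) :=
    Function.update_of_ne (fun e => n2 (by linear_combination -e)) _ _
  have hxw : ∀ z, x ≠ w z := by
    rintro z rfl
    obtain rfl := h.eq_of_mem (hwX z) hx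
    refine hxy (hwi ▸ hdom _ y (Or.inr hy) (h.ne_of_mem hy (hu _) fun e => n1 ?_))
    linear_combination e
  rw [hasCap_iff_exists_zmod]
  refine ⟨k, h.1, w, fun a b hab => h.eq_of_mem (hwX a) (hab ▸ hwX b),
    h.adj_iff_of_adj_add_one hwX (h.adj_update_add_one hu hdom hy), x,
    fun ⟨z, e⟩ => hxw z e.symm, i - 1, fun z => ?_⟩
  rw [sub_add_cancel]
  refine ⟨fun hxz => ?_, ?_⟩
  · rcases h.near_of_adj hx (hwX z) hxz with rfl | rfl | rfl
    exacts [Or.inl rfl, Or.inr rfl, absurd (by simpa [w] using hxz) hxy]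
  · rintro (rfl | rfl)
    · rw [hwi']
      exact (hdom _ x (Or.inr (by rwa [sub_add_cancel])) (hwi' ▸ hxw _)).symm
    · rw [hwi]
      exact (hdom _ x (Or.inl (Or.inr hx)) (hwi ▸ hxw _)).symm

lemma adj_of_near (h : IsRingPartition G k X)
    (hcomp : ∀ i : ZMod k, ∀ x ∈ X i, ∀ y ∈ X (i + 1), G.Adj x y) {v w : V} {i j : ZMod k}
    (hv : v ∈ X i) (hw : w ∈ X j) (hij : j = i - 1 ∨ j = i ∨ j = i + 1) (hvw : v ≠ w) :
    G.Adj v w := by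
  rcases hij with rfl | rfl | rfl
  · exact (hcomp _ w hw v (by rwa [sub_add_cancel])).symm
  · exact h.adj_of_mem_of_mem hv hw hvw
  · exact hcomp i v hv w hw

lemma adj_of_adj_of_mem_of_mem (h : IsRingPartition G k X)
    (hcomp : ∀ i : ZMod k, ∀ x ∈ X i, ∀ y ∈ X (i + 1), G.Adj x y) {u v z : V} {i : ZMod k}
    (hu : u ∈ X i) (hv : v ∈ X i) (hzu : G.Adj z u) (hzv : z ≠ v) : G.Adj z v := by
  obtain ⟨l, hz⟩ := h.exists_mem z
  exact h.adj_of_near hcomp hz hv (h.near_of_adj hz hu hzu) hzv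

lemma eq_sub_one_or_eq_add_one_of_adj (h : IsRingPartition G k X)
    (hcomp : ∀ i : ZMod k, ∀ x ∈ X i, ∀ y ∈ X (i + 1), G.Adj x y) {x a c : V} {i l : ZMod k}
    (hx : x ∈ X i) (ha : a ∈ X l) (hxa : G.Adj x a) (hca : G.Adj c a) (hcx : ¬ G.Adj c x)
    (hcx' : c ≠ x) : l = i - 1 ∨ l = i + 1 := by
  rcases h.near_of_adj hx ha hxa with hl | rfl | hl
  exacts [Or.inl hl, absurd (h.adj_of_adj_of_mem_of_mem hcomp ha hx hca hcx') hcx, Or.inr hl]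

lemma not_hasCap (h : IsRingPartition G k X)
    (hcomp : ∀ i : ZMod k, ∀ x ∈ X i, ∀ y ∈ X (i + 1), G.Adj x y) : ¬ HasCap G := by
  rw [hasCap_iff_exists_zmod]
  rintro ⟨n, hn, w, hw, hadj, x, hx, j, hxw⟩
  obtain ⟨n1, n2, n3⟩ := ZMod.one_two_three_ne_zero hn
  have hxa : G.Adj x (w j) := (hxw j).2 (Or.inl rfl)
  have hxb : G.Adj x (w (j + 1)) := (hxw _).2 (Or.inr rfl)
  have hab : G.Adj (w j) (w (j + 1)) := (hadj _ _).2 (Or.inr (by ring))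
  have hca : G.Adj (w (j - 1)) (w j) := (hadj _ _).2 (Or.inr (by ring))
  have hc'b : G.Adj (w (j + 2)) (w (j + 1)) := (hadj _ _).2 (Or.inl (by ring))
  have hcb : ¬ G.Adj (w (j - 1)) (w (j + 1)) := by
    rw [hadj]
    rintro (h' | h')
    exacts [n3 (by linear_combination -h'), n1 (by linear_combination h')]
  have hcx : ¬ G.Adj (w (j - 1)) x := fun h' => by
    rcases (hxw _).1 h'.symm with h'' | h''
    exacts [n1 (by linear_combination -h''), n2 (by linear_combination -h'')]
  have hc'x : ¬ G.Adj (w (j + 2)) x := fun h' => by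
    rcases (hxw _).1 h'.symm with h'' | h''
    exacts [n2 (by linear_combination h''), n1 (by linear_combination h'')]
  obtain ⟨i, hxi⟩ := h.exists_mem x
  obtain ⟨l, ha⟩ := h.exists_mem (w j)
  obtain ⟨l', hb⟩ := h.exists_mem (w (j + 1))
  have hl := h.eq_sub_one_or_eq_add_one_of_adj hcomp hxi ha hxa hca hcx fun e => hx ⟨_, e⟩
  have hl' := h.eq_sub_one_or_eq_add_one_of_adj hcomp hxi hb hxb hc'b hc'x fun e => hx ⟨_, e⟩
  obtain rfl := ZMod.eq_of_near_of_sides h.1 hl hl' (h.near_of_adj ha hb hab)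
  refine hcb (h.adj_of_adj_of_mem_of_mem hcomp ha hb hca (hw.ne fun e => n2 ?_))
  linear_combination -e

end IsRingPartition

theorem stmt7 (G : SimpleGraph V) (k : ℕ) (X : ZMod k → Set V)
    (h : IsRingPartition G k X) :
    ¬ HasCap G ↔ ∀ i : ZMod k, ∀ x ∈ X i, ∀ y ∈ X (i + 1), G.Adj x y :=
  ⟨fun hcap _ _ hx _ hy => by_contra fun hxy => hcap (h.hasCap_of_not_adj hx hy hxy),
    h.not_hasCap⟩
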